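/- arXiv:1311.2352 — 4 statements merged into one kernel-verified Lean document; each statement's English description precedes it below -/
import Mathlib

section
/- Let A be a partial algebra with at least two elements and let A_0 be its one-point completion. Then every generating set of A^n is a generating set of A_0^n, and every generating set of A_0^n contains a generating set of A^n. Consequently d_{A_0}(n) = d_A(n) for all n. -/
/-!
Since `0` (here `none`) is absorbing, a term of `A₀^n` evaluates to a tuple without `0` only if
every subterm does, and then every operation was applied inside its domain; so such tuples are
generated in `A^n` by the generators without `0`. Conversely `A^n` sits inside `A₀^n`, and any
tuple `h` of `A₀^n` is the meet of two tuples of `A^n` that agree with `h` where it is defined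
and differ (using `a ≠ b`) where it is `0`.
-/

/-- An algebraic signature: a type of operation symbols with arities. -/
structure Sig where
  ops : Type
  arity : ops → ℕ

/-- An algebra of signature `σ` on carrier `α`. -/
structure Alg (σ : Sig) (α : Type) where
  interp : ∀ f : σ.ops, (Fin (σ.arity f) → α) → α

namespace Alg

variable {σ : Sig} {α : Type}

/-- The subuniverse generated by `G`. -/
inductive Gen (A : Alg σ α) (G : Set α) : α → Prop
  | base {a : α} : a ∈ G → Gen A G a
  | app (f : σ.ops) (args : Fin (σ.arity f) → α) :
      (∀ i, Gen A G (args i)) → Gen A G (A.interp f args)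

/-- `G` generates `A`. -/
def Generates (A : Alg σ α) (G : Set α) : Prop := ∀ a : α, A.Gen G a

/-- The `n`-th direct power of `A`, with operations acting coordinatewise. -/
def pow (A : Alg σ α) (n : ℕ) : Alg σ (Fin n → α) where
  interp f args := fun j => A.interp f fun i => args i j

/-- `A^n` is generated by some set of at most `g` elements. -/
def genBy (A : Alg σ α) (n g : ℕ) : Prop :=
  ∃ G : Finset (Fin n → α), G.card ≤ g ∧ (A.pow n).Generates ↑G

/-- `d A n`: the least size of a generating set of `A^n`. -/
noncomputable def d (A : Alg σ α) (n : ℕ) : ℕ := sInf {g | A.genBy n g}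

/-- `h A g`: the largest `n` such that `A^n` is `g`-generated. -/
noncomputable def h (A : Alg σ α) (g : ℕ) : ℕ := sSup {n | A.genBy n g}

end Alg

/-- A partial algebra of signature `σ` on carrier `α`: each operation has a
domain of definition, and `interp` is only meaningful on that domain. -/
structure PartialAlg (σ : Sig) (α : Type) where
  dom : ∀ f : σ.ops, Set (Fin (σ.arity f) → α)
  interp : ∀ f : σ.ops, (Fin (σ.arity f) → α) → α

namespace PartialAlg

variable {σ : Sig} {α : Type}

/-- The subuniverse of a partial algebra generated by `G`. -/
inductive Gen (A : PartialAlg σ α) (G : Set α) : α → Prop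
  | base {a : α} : a ∈ G → Gen A G a
  | app (f : σ.ops) (args : Fin (σ.arity f) → α) :
      args ∈ A.dom f → (∀ i, Gen A G (args i)) → Gen A G (A.interp f args)

/-- `G` generates the partial algebra `A`. -/
def Generates (A : PartialAlg σ α) (G : Set α) : Prop := ∀ a : α, A.Gen G a

/-- The `n`-th direct power of a partial algebra: an operation is defined on a
tuple of tuples iff it is defined in every coordinate, and acts coordinatewise. -/
def pow (A : PartialAlg σ α) (n : ℕ) : PartialAlg σ (Fin n → α) where
  dom f := {args | ∀ j : Fin n, (fun i => args i j) ∈ A.dom f}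
  interp f args := fun j => A.interp f fun i => args i j

/-- `d A n`: the least size of a generating set of `A^n` (partial algebra). -/
noncomputable def d (A : PartialAlg σ α) (n : ℕ) : ℕ :=
  sInf {g | ∃ G : Finset (Fin n → α), G.card ≤ g ∧ (A.pow n).Generates ↑G}

end PartialAlg

/-- The signature of the one-point completion: all symbols of `σ`, plus a
binary meet symbol. -/
def extSig (σ : Sig) : Sig where
  ops := σ.ops ⊕ Unit
  arity := Sum.elim σ.arity (fun _ => 2)

/-- The one-point completion of a partial algebra: adjoin a new absorbing
element `none`, extend each partial operation by the value `none` off its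
domain, and add the meet operation `a ∧ b = a` if `a = b`, else `none`. -/
noncomputable def PartialAlg.onePoint {σ : Sig} {α : Type}
    (A : PartialAlg σ α) : Alg (extSig σ) (Option α) where
  interp f :=
    match f with
    | Sum.inl f' => fun args =>
        letI := Classical.dec (∃ g : Fin (σ.arity f') → α,
          g ∈ A.dom f' ∧ ∀ i, args i = some (g i))
        if h : ∃ g : Fin (σ.arity f') → α,
            g ∈ A.dom f' ∧ ∀ i, args i = some (g i)
        then some (A.interp f' h.choose)
        else none
    | Sum.inr _ => fun args =>
        letI := Classical.decEq (Option α)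
        if args ⟨0, by simp [extSig]⟩ = args ⟨1, by simp [extSig]⟩ then args ⟨0, by simp [extSig]⟩ else none

namespace PartialAlg

variable {σ : Sig} {α : Type} (A : PartialAlg σ α)

theorem onePoint_interp_inl_some {f : σ.ops} {w : Fin (σ.arity f) → α} (hw : w ∈ A.dom f) :
    A.onePoint.interp (Sum.inl f) (fun i => some (w i)) = some (A.interp f w) := by
  simp only [onePoint]
  split
  next hex =>
    have hchoose : hex.choose = w :=
      funext fun i => (Option.some_injective α (hex.choose_spec.2 i)).symm
    rw [hchoose]
  next hex => exact absurd ⟨w, hw, fun _ => rfl⟩ hex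

theorem exists_of_onePoint_interp_inl_eq_some {f : σ.ops} {v : Fin (σ.arity f) → Option α}
    {x : α} (h : A.onePoint.interp (Sum.inl f) v = some x) :
    ∃ w ∈ A.dom f, (∀ i, v i = some (w i)) ∧ A.interp f w = x := by
  simp only [onePoint] at h
  split at h
  next hex => exact ⟨hex.choose, hex.choose_spec.1, hex.choose_spec.2, Option.some_injective α h⟩
  next => cases h

theorem onePoint_interp_inr_of_eq (u : Unit) {x y : Option α} (h : x = y) :
    A.onePoint.interp (Sum.inr u) ![x, y] = x := by
  simp only [onePoint]
  exact if_pos h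

theorem onePoint_interp_inr_of_ne (u : Unit) {x y : Option α} (h : x ≠ y) :
    A.onePoint.interp (Sum.inr u) ![x, y] = none := by
  simp only [onePoint]
  exact if_neg h

theorem eq_some_of_onePoint_interp_inr_eq_some {u : Unit} {v : Fin 2 → Option α} {x : α}
    (h : A.onePoint.interp (Sum.inr u) v = some x) : v 0 = some x := by
  have hv : v = ![v 0, v 1] := by ext i; fin_cases i <;> rfl
  by_cases h01 : v 0 = v 1
  · rwa [hv, onePoint_interp_inr_of_eq A u h01] at h
  · rw [hv, onePoint_interp_inr_of_ne A u h01] at h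
    cases h

theorem onePoint_interp_inr_getD (u : Unit) (x : Option α) {a b : α} (hab : a ≠ b) :
    A.onePoint.interp (Sum.inr u) ![some (x.getD a), some (x.getD b)] = x := by
  cases x with
  | some x => exact A.onePoint_interp_inr_of_eq u rfl
  | none => exact A.onePoint_interp_inr_of_ne u (by simpa using hab)

variable {n : ℕ}

theorem onePoint_pow_gen_some {G : Set (Fin n → α)} {g : Fin n → α} (hg : (A.pow n).Gen G g) :
    (A.onePoint.pow n).Gen ((fun g (j : Fin n) => some (g j)) '' G) (fun j => some (g j)) := by
  induction hg with
  | base hg => exact .base ⟨_, hg, rfl⟩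
  | app f args hdom _ ih =>
    have hinterp : (fun j => some ((A.pow n).interp f args j)) =
        (A.onePoint.pow n).interp (Sum.inl f) (fun i j => some (args i j)) :=
      funext fun j => (A.onePoint_interp_inl_some (hdom j)).symm
    rw [hinterp]
    exact Alg.Gen.app (A := A.onePoint.pow n) (Sum.inl f) _ ih

theorem onePoint_pow_generates [Nontrivial α] {G : Set (Fin n → α)}
    (hG : (A.pow n).Generates G) :
    (A.onePoint.pow n).Generates ((fun g (j : Fin n) => some (g j)) '' G) := by
  intro h
  obtain ⟨a, b, hab⟩ := exists_pair_ne α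
  let args : Fin ((extSig σ).arity (Sum.inr ())) → Fin n → Option α :=
    ![fun j => some ((h j).getD a), fun j => some ((h j).getD b)]
  have hmeet : h = (A.onePoint.pow n).interp (Sum.inr ()) args := by
    funext j
    show h j = A.onePoint.interp (Sum.inr ()) (fun i => args i j)
    have hcol : (fun i => args i j) = ![some ((h j).getD a), some ((h j).getD b)] := by
      ext i; fin_cases i <;> rfl
    rw [hcol, A.onePoint_interp_inr_getD () (h j) hab]
  rw [hmeet]
  refine Alg.Gen.app (A := A.onePoint.pow n) (Sum.inr ()) args fun i => ?_
  fin_cases i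
  exacts [A.onePoint_pow_gen_some (hG _), A.onePoint_pow_gen_some (hG _)]

theorem pow_gen_of_onePoint_pow_gen {H : Set (Fin n → Option α)} {h : Fin n → Option α}
    (hh : (A.onePoint.pow n).Gen H h) (g : Fin n → α) (hgh : h = fun j => some (g j)) :
    (A.pow n).Gen {g | (fun j => some (g j)) ∈ H} g := by
  induction hh generalizing g with
  | base hh => exact .base (show _ ∈ H from hgh ▸ hh)
  | app f args _ ih =>
    rcases f with f | u
    · choose w hw hargs hval using
        fun j => A.exists_of_onePoint_interp_inl_eq_some (congrFun hgh j)
      have hg : g = (A.pow n).interp f (fun i j => w j i) := funext fun j => (hval j).symm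
      rw [hg]
      exact .app f _ hw fun i => ih i _ (funext fun j => hargs j i)
    · exact ih (0 : Fin 2) g <| funext fun j =>
        A.eq_some_of_onePoint_interp_inr_eq_some (v := fun i => args i j) (congrFun hgh j)

theorem pow_generates_of_onePoint_pow_generates {H : Set (Fin n → Option α)}
    (hH : (A.onePoint.pow n).Generates H) :
    (A.pow n).Generates {g | (fun j => some (g j)) ∈ H} :=
  fun g => A.pow_gen_of_onePoint_pow_gen (hH _) g rfl

theorem onePoint_genBy_iff [Nontrivial α] (k : ℕ) :
    A.onePoint.genBy n k ↔ ∃ G : Finset (Fin n → α), G.card ≤ k ∧ (A.pow n).Generates ↑G := by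
  classical
  have hinj : Function.Injective fun (g : Fin n → α) j => some (g j) :=
    (Option.some_injective α).comp_left
  constructor
  · rintro ⟨H, hcard, hH⟩
    refine ⟨H.preimage _ hinj.injOn, ?_, ?_⟩
    · exact (Finset.card_le_card_of_injOn _ (fun _ hg => Finset.mem_preimage.mp hg)
        hinj.injOn).trans hcard
    · rw [Finset.coe_preimage]
      exact A.pow_generates_of_onePoint_pow_generates hH
  · rintro ⟨G, hcard, hG⟩
    refine ⟨G.image fun g j => some (g j), Finset.card_image_le.trans hcard, ?_⟩
    rw [Finset.coe_image]
    exact A.onePoint_pow_generates hG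

theorem onePoint_d_eq_d [Nontrivial α] (n : ℕ) : A.onePoint.d n = A.d n :=
  congrArg sInf (Set.ext fun k => A.onePoint_genBy_iff k)

end PartialAlg

/-- for a partial algebra `A` with at least two elements and its
one-point completion `A₀`: every generating set of `A^n` generates `A₀^n`,
every generating set of `A₀^n` contains a generating set of `A^n` (the tuples
of the generating set that lie in `A^n` already generate `A^n`), and
consequently `d_{A₀}(n) = d_A(n)` for all `n`. -/
theorem stmt_10 (σ : Sig) (α : Type) [Nontrivial α] (A : PartialAlg σ α) :
    ∀ n : ℕ,
      (∀ G : Set (Fin n → α), (A.pow n).Generates G →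
        (A.onePoint.pow n).Generates ((fun g (j : Fin n) => some (g j)) '' G)) ∧
      (∀ H : Set (Fin n → Option α), (A.onePoint.pow n).Generates H →
        (A.pow n).Generates {g : Fin n → α | (fun j => some (g j)) ∈ H}) ∧
      A.onePoint.d n = A.d n :=
  fun n => ⟨fun _ => A.onePoint_pow_generates, fun _ => A.pow_generates_of_onePoint_pow_generates,
    A.onePoint_d_eq_d n⟩
end

section
/- Every function D : ω → ω ∪ {ω} that (i) is increasing, (ii) satisfies D(0) ∈ {0,1}, and (iii) satisfies D(2) > 0, is the d-function of some countably infinite total algebra A, i.e. d_A(n) = D(n) for all n ∈ ω (where d_A(n) = ω means A^n is not finitely generated). -/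
/-- The extended (`ℕ∞`-valued) `d`-function: the least cardinality of a
generating set of `A^n`, with value `⊤` (= ω) if `A^n` is not finitely
generated. -/
noncomputable def Alg.dE {σ : Sig} {α : Type} (A : Alg σ α) (n : ℕ) : ℕ∞ :=
  sInf {g : ℕ∞ | ∃ G : Finset (Fin n → α),
    (G.card : ℕ∞) ≤ g ∧ (A.pow n).Generates ↑G}

/-!
The algebra lives on `ℕ`. Whenever `D N ≤ K`, each `w : ℕ^N` gets a `K`-ary operation sending
the column `(code j 0, …, code j (K-1))` to `w j` and everything else to `0`. Applied
coordinatewise to the `K` tuples `(code j i)_{j<N}` it yields `w`, so `A^N` is `K`-generated.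
Conversely, an injective nowhere-zero tuple of `A^n` (`n ≥ 1`) can only be produced by such an
operation with `n ≤ N`; either all its `K` arguments lie in the generating set `G`, and then
`D n ≤ D N ≤ K ≤ |G|`, or one argument is again injective and nowhere zero, and we recurse.
Constants exist exactly when `D 1 = 0` or `D 0 = 0`, which accounts for those two values.
-/

namespace Alg

variable {σ : Sig} {α : Type}

lemma not_gen_empty_of_arity_pos (A : Alg σ α) (hσ : ∀ f, 0 < σ.arity f) {a : α} :
    ¬ A.Gen ∅ a := by
  intro h
  induction h with
  | base h => exact h
  | app f _ _ ih => exact ih ⟨0, hσ f⟩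

lemma dE_eq {A : Alg σ α} {n : ℕ} {e : ℕ∞}
    (hle : ∀ G : Finset (Fin n → α), (A.pow n).Generates ↑G → e ≤ G.card)
    (hge : ∀ k : ℕ, e = k → ∃ G : Finset (Fin n → α), G.card ≤ k ∧ (A.pow n).Generates ↑G) :
    A.dE n = e := by
  apply le_antisymm
  · induction e using ENat.recTopCoe with
    | top => exact le_top
    | coe k =>
      obtain ⟨G, hcard, hG⟩ := hge k rfl
      exact sInf_le ⟨G, by exact_mod_cast hcard, hG⟩
  · exact le_sInf fun g ⟨G, hcard, hG⟩ => (hle G hG).trans hcard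

end Alg

namespace DAlg

/-- Nonzero, so that it never collides with the default output `0`. -/
def code (j i : ℕ) : ℕ := Nat.pair j i + 1

lemma code_ne_zero (j i : ℕ) : code j i ≠ 0 := Nat.succ_ne_zero _

lemma code_inj {j i j' i' : ℕ} : code j i = code j' i' ↔ j = j' ∧ i = i' := by
  simp only [code, add_left_inj, Nat.pair_eq_pair]

def column (K : ℕ) {N : ℕ} (j : Fin N) : Fin K → ℕ := fun i => code j i

lemma column_injective {K N : ℕ} (hK : 1 ≤ K) : Function.Injective (column K (N := N)) :=
  fun _ _ h => Fin.ext (code_inj.mp (congrFun h ⟨0, hK⟩)).1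

inductive Op (D : ℕ → ℕ∞) : Type
  | F (K N : ℕ) (w : Fin N → ℕ) (hK : 1 ≤ K) (hD : D N ≤ K) : Op D
  | C (m : ℕ) (h : D 1 = 0) : Op D
  | Z (h : D 0 = 0) : Op D

def arity {D : ℕ → ℕ∞} : Op D → ℕ
  | .F K .. => K
  | .C .. => 0
  | .Z .. => 0

def sig (D : ℕ → ℕ∞) : Sig := ⟨Op D, arity⟩

noncomputable def alg (D : ℕ → ℕ∞) : Alg (sig D) ℕ where
  interp
    | .F K _ w .. => Function.extend (column K) w 0
    | .C m _ => fun _ => m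
    | .Z _ => fun _ => 0

variable {D : ℕ → ℕ∞}

lemma alg_F_column {K N : ℕ} (w : Fin N → ℕ) (hK : 1 ≤ K) (hD : D N ≤ K) (j : Fin N) :
    (alg D).interp (.F K N w hK hD) (column K j) = w j :=
  (column_injective hK).extend_apply w 0 j

lemma exists_column_of_alg_F_ne_zero {K N : ℕ} {w : Fin N → ℕ} {hK : 1 ≤ K} {hD : D N ≤ K}
    {x : Fin K → ℕ} (h : (alg D).interp (.F K N w hK hD) x ≠ 0) :
    ∃ j : Fin N, column K j = x := by
  by_contra hx
  exact h (Function.extend_apply' (f := column K) w 0 x hx)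

def IsGeneric {n : ℕ} (a : Fin n → ℕ) : Prop := Function.Injective a ∧ ∀ j, a j ≠ 0

lemma exists_code_of_isGeneric_F {n K N : ℕ} {w : Fin N → ℕ} {hK : 1 ≤ K} {hD : D N ≤ K}
    {args : Fin K → Fin n → ℕ}
    (ha : IsGeneric (((alg D).pow n).interp (.F K N w hK hD) args)) :
    ∃ m : Fin n → Fin N, Function.Injective m ∧ ∀ i j, args i j = code (m j) i := by
  choose m hm using fun j =>
    exists_column_of_alg_F_ne_zero (w := w) (hK := hK) (hD := hD) (ha.2 j)
  have hout : ∀ j, ((alg D).pow n).interp (.F K N w hK hD) args j = w (m j) := fun j =>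
    (congrArg _ (hm j).symm).trans (alg_F_column w hK hD (m j))
  refine ⟨m, fun j j' hjj' => ha.1 ?_, fun i j => (congrFun (hm j) i).symm⟩
  rw [hout, hout, hjj']

lemma mem_or_le_card_of_gen (hmono : Monotone D) {n : ℕ} (hn : 1 ≤ n) {G : Finset (Fin n → ℕ)}
    {a : Fin n → ℕ} (hgen : ((alg D).pow n).Gen ↑G a) (ha : IsGeneric a) :
    a ∈ G ∨ D n ≤ G.card := by
  induction hgen with
  | base h => exact Or.inl h
  | app f args _ ih =>
    cases f with
    | Z h => exact absurd rfl (ha.2 ⟨0, hn⟩)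
    | C m h =>
      -- a constant tuple is injective only in dimension `1`
      obtain rfl : n = 1 := by
        by_contra hne
        exact absurd (ha.1 (a₁ := ⟨0, hn⟩) (a₂ := ⟨1, by omega⟩) rfl) (by simp [Fin.ext_iff])
      exact Or.inr (h ▸ zero_le)
    | F K N w hK hD =>
      obtain ⟨m, hm_inj, hargs⟩ := exists_code_of_isGeneric_F ha
      by_cases hG : ∀ i, args i ∈ G
      · have hargs_inj : Function.Injective fun i => (⟨args i, hG i⟩ : G) := by
          intro i i' hii'
          have h0 : args i ⟨0, hn⟩ = args i' ⟨0, hn⟩ := congrFun (congrArg Subtype.val hii') _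
          rw [hargs i ⟨0, hn⟩, hargs i' ⟨0, hn⟩] at h0
          exact Fin.ext (code_inj.mp h0).2
        have hK_le : K ≤ G.card := by
          have := Fintype.card_le_of_injective _ hargs_inj
          rwa [Fintype.card_fin, Fintype.card_coe] at this
        have hnN : n ≤ N := by simpa using Fintype.card_le_of_injective m hm_inj
        exact Or.inr <| calc
          D n ≤ D N := hmono hnN
          _ ≤ K := hD
          _ ≤ G.card := by exact_mod_cast hK_le
      · obtain ⟨i, hi⟩ := not_forall.mp hG
        have hgeneric : IsGeneric (args i) := by
          refine ⟨fun j j' hjj' => hm_inj ?_, fun j => hargs i j ▸ code_ne_zero _ _⟩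
          rw [hargs i j, hargs i j'] at hjj'
          exact Fin.ext (code_inj.mp hjj').1
        exact Or.inr ((ih i hgeneric).resolve_left hi)

lemma le_card_of_generates (hmono : Monotone D) {n : ℕ} (hn : 1 ≤ n) {G : Finset (Fin n → ℕ)}
    (hG : ((alg D).pow n).Generates ↑G) : D n ≤ G.card := by
  let M := G.sup fun g => g ⟨0, hn⟩
  let a : Fin n → ℕ := fun j => M + 1 + j
  have ha : IsGeneric a :=
    ⟨fun j j' h => Fin.ext (by simpa [a] using h), fun j => by simp [a]⟩
  have haG : a ∉ G := fun h => by
    have : a ⟨0, hn⟩ ≤ M := Finset.le_sup (f := fun g => g ⟨0, hn⟩) h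
    simp [a] at this
  exact (mem_or_le_card_of_gen hmono hn (hG a) ha).resolve_left haG

lemma generates_codes {n k : ℕ} (hk : 1 ≤ k) (hD : D n ≤ k) :
    ((alg D).pow n).Generates ↑(Finset.univ.image fun (i : Fin k) (j : Fin n) => code j i) := by
  intro a
  have ha : ((alg D).pow n).interp (.F k n a hk hD) (fun i j => code j i) = a :=
    funext fun j => alg_F_column a hk hD j
  rw [← ha]
  exact .app _ _ fun i => .base (Finset.mem_image_of_mem _ (Finset.mem_univ i))

lemma generates_pow_zero_of_D_zero_eq_zero (h : D 0 = 0) (G : Set (Fin 0 → ℕ)) :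
    ((alg D).pow 0).Generates G := fun a => by
  rw [Subsingleton.elim a (((alg D).pow 0).interp (.Z h) Fin.elim0)]
  exact .app _ _ fun i => i.elim0

lemma generates_pow_one_of_D_one_eq_zero (h : D 1 = 0) (G : Set (Fin 1 → ℕ)) :
    ((alg D).pow 1).Generates G := fun a => by
  rw [show a = ((alg D).pow 1).interp (.C (a 0) h) Fin.elim0 from
    funext fun j => congrArg a (Subsingleton.elim j 0)]
  exact .app _ _ fun i => i.elim0

lemma nonempty_of_generates_pow_zero (hmono : Monotone D) (h0 : D 0 = 1)
    {G : Finset (Fin 0 → ℕ)} (hG : ((alg D).pow 0).Generates ↑G) : G.Nonempty := by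
  rw [Finset.nonempty_iff_ne_empty]
  rintro rfl
  have hgen := hG Fin.elim0
  rw [Finset.coe_empty] at hgen
  refine ((alg D).pow 0).not_gen_empty_of_arity_pos (fun f => ?_) hgen
  cases f with
  | F K N w hK hD => exact hK
  | C m h => exact absurd (hmono zero_le_one) (by simp [h0, h])
  | Z h => exact absurd (h0.symm.trans h) one_ne_zero

lemma dE_alg (hmono : Monotone D) (h0 : D 0 = 0 ∨ D 0 = 1) (h2 : 0 < D 2) (n : ℕ) :
    (alg D).dE n = D n := by
  refine Alg.dE_eq (fun G hG => ?_) (fun k hk => ?_)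
  · rcases Nat.eq_zero_or_pos n with rfl | hn
    · rcases h0 with h0 | h0
      · exact h0 ▸ zero_le
      · rw [h0, Nat.one_le_cast, Finset.one_le_card]
        exact nonempty_of_generates_pow_zero hmono h0 hG
    · exact le_card_of_generates hmono hn hG
  · rcases Nat.eq_zero_or_pos k with rfl | hk_pos
    · have hn : n < 2 := by
        by_contra h
        exact absurd (h2.trans_le (hmono (not_lt.mp h))) (by simp [hk])
      refine ⟨∅, le_rfl, ?_⟩
      interval_cases n
      · exact generates_pow_zero_of_D_zero_eq_zero hk _
      · exact generates_pow_one_of_D_one_eq_zero hk _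
    · exact ⟨_, Finset.card_image_le.trans (by simp), generates_codes hk_pos hk.le⟩

end DAlg

/-- every function `D : ω → ω ∪ {ω}` that is increasing, has
`D 0 ∈ {0,1}` and `D 2 > 0` is the `d`-function of some countably infinite
total algebra. -/
theorem stmt_12 (D : ℕ → ℕ∞) (hmono : Monotone D)
    (h0 : D 0 = 0 ∨ D 0 = 1) (h2 : 0 < D 2) :
    ∃ (σ : Sig) (A : Alg σ ℕ), ∀ n : ℕ, A.dE n = D n :=
  ⟨DAlg.sig D, DAlg.alg D, DAlg.dE_alg hmono h0 h2⟩
end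

section
/- Let D : {0,1,…,k} → ω be increasing with D(0) ∈ {0,1} and D(2) > 0. Then there exists a finite algebra A of size 1 + Σ_{j=0}^{k} j·D(j) such that d_A(n) = D(n) for all n ∈ {0,1,…,k}. -/
namespace Stmt14

/-- size of tribe `t` -/
def s (k : ℕ) (D : ℕ → ℕ) (t : ℕ) : ℕ :=
  ∑ j ∈ Finset.range (k + 1), if t < D j then j else 0

abbrev Carrier (k : ℕ) (D : ℕ → ℕ) : Type :=
  Option ((t : Fin (D k)) × Fin (s k D t.val))

def tribe (k : ℕ) (D : ℕ → ℕ) (t : ℕ) : Set (Carrier k D) :=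
  {x | ∃ p, x = some p ∧ p.1.val = t}

/-- activation level of tribe `t`: least `j` with `t < D j`. -/
def act (k : ℕ) (D : ℕ → ℕ) (t : ℕ) (ht : t < D k) : ℕ :=
  Nat.find (⟨k, ht⟩ : ∃ j, t < D j)

def Sel (k : ℕ) (D : ℕ → ℕ) (m : ℕ) (F : (Fin m → Carrier k D) → Carrier k D) (t : ℕ) : Prop :=
  ∃ (p : Fin m) (ρ : Carrier k D → Carrier k D),
    ∀ x, F x ∈ tribe k D t → x p ∈ tribe k D t ∧ F x = ρ (x p)

def Cre (k : ℕ) (D : ℕ → ℕ) (m : ℕ) (F : (Fin m → Carrier k D) → Carrier k D)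
    (t : ℕ) (ht : t < D k) : Prop :=
  ∃ S : Finset (Carrier k D), S.card < act k D t ht ∧ ∀ x, F x ∈ tribe k D t → F x ∈ S

def Good (k : ℕ) (D : ℕ → ℕ) (m : ℕ) (F : (Fin m → Carrier k D) → Carrier k D) : Prop :=
  (m = 0 → D 0 = 0) ∧ ∀ (t : ℕ) (ht : t < D k), Sel k D m F t ∨ Cre k D m F t ht

def sig (k : ℕ) (D : ℕ → ℕ) : Sig :=
  ⟨(m : ℕ) × {F : (Fin m → Carrier k D) → Carrier k D // Good k D m F}, fun f => f.1⟩

def alg (k : ℕ) (D : ℕ → ℕ) : Alg (sig k D) (Carrier k D) :=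
  ⟨fun f args => f.2.1 args⟩

lemma act_le_iff (k : ℕ) (D : ℕ → ℕ) (hmono : ∀ i j : ℕ, i ≤ j → j ≤ k → D i ≤ D j)
    {t n : ℕ} (ht : t < D k) (hn : n ≤ k) :
    act k D t ht ≤ n ↔ t < D n := by
  constructor
  · intro h
    exact lt_of_lt_of_le (Nat.find_spec (⟨k, ht⟩ : ∃ j, t < D j)) (hmono _ n h hn)
  · intro h
    exact Nat.find_min' _ h

lemma k_le_s (k : ℕ) (D : ℕ → ℕ) {t : ℕ} (ht : t < D k) : k ≤ s k D t := by
  unfold s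
  have hk : k ∈ Finset.range (k + 1) := by simp
  calc k = (if t < D k then k else 0) := by rw [if_pos ht]
    _ ≤ ∑ j ∈ Finset.range (k + 1), if t < D j then j else 0 :=
      Finset.single_le_sum (f := fun j => if t < D j then j else 0)
        (fun j _ => Nat.zero_le _) hk

lemma card_carrier (k : ℕ) (D : ℕ → ℕ) (hmono : ∀ i j : ℕ, i ≤ j → j ≤ k → D i ≤ D j) :
    Nat.card (Carrier k D) = 1 + ∑ j ∈ Finset.range (k + 1), j * D j := by
  rw [Nat.card_eq_fintype_card, Fintype.card_option, Fintype.card_sigma]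
  simp only [Fintype.card_fin]
  rw [add_comm]
  congr 1
  rw [Fin.sum_univ_eq_sum_range (fun t => s k D t)]
  unfold s
  rw [Finset.sum_comm]
  apply Finset.sum_congr rfl
  intro j hj
  have hj' : j ≤ k := by
    have := Finset.mem_range.mp hj; omega
  have hDj : D j ≤ D k := hmono j k hj' le_rfl
  rw [← Finset.sum_subset (Finset.range_subset_range.mpr hDj)
    (fun t _ htn => by
      rw [Finset.mem_range, not_lt] at htn
      exact if_neg (by omega))]
  rw [Finset.sum_congr rfl (fun t htm => if_pos (Finset.mem_range.mp htm)),
    Finset.sum_const, Finset.card_range, smul_eq_mul, mul_comm]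


lemma mem_tribe_ne_none {k : ℕ} {D : ℕ → ℕ} {t : ℕ} {x : Carrier k D}
    (hx : x ∈ tribe k D t) : x ≠ none := by
  obtain ⟨p, hp, -⟩ := hx
  rw [hp]; exact Option.some_ne_none p

lemma heredity (k : ℕ) (D : ℕ → ℕ) {n : ℕ} (G : Set (Fin n → Carrier k D)) {t : ℕ}
    (ht : t < D k) (hact : act k D t ht ≤ n) {f : Fin n → Carrier k D}
    (hf : ((alg k D).pow n).Gen G f) :
    ((∀ i, f i ∈ tribe k D t) ∧ Function.Injective f) →
      ∃ g ∈ G, ∀ i, g i ∈ tribe k D t := by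
  induction hf with
  | base h => exact fun hQ => ⟨_, h, hQ.1⟩
  | app F args hargs ih =>
    rintro ⟨h1, h2⟩
    obtain ⟨m, F, hGood⟩ := F
    rcases hGood.2 t ht with ⟨p, ρ, hsel⟩ | ⟨S, hcard, hmem⟩
    · refine ih p ⟨fun j => (hsel _ (h1 j)).1, ?_⟩
      intro j j' hjj
      apply h2
      have e1 := (hsel _ (h1 j)).2
      have e2 := (hsel _ (h1 j')).2
      have e3 : ρ (args p j) = ρ (args p j') := by rw [hjj]
      exact e1.trans (e3.trans e2.symm)
    · exfalso
      have hS : ∀ j, (((alg k D).pow n).interp ⟨m, F, hGood⟩ args) j ∈ S :=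
        fun j => hmem _ (h1 j)
      have hn' : n ≤ S.card := by
        have := Finset.card_le_card_of_injOn (s := (Finset.univ : Finset (Fin n)))
          (fun j => (((alg k D).pow n).interp ⟨m, F, hGood⟩ args) j)
          (fun j _ => hS j) (fun a _ b _ h => h2 h)
        simpa using this
      omega


section UB

variable (k : ℕ) (D : ℕ → ℕ)

/-- the dedicated generator of tribe `p` at power `n` -/
def gtuple (hmono : ∀ i j : ℕ, i ≤ j → j ≤ k → D i ≤ D j) (n : ℕ) (hn : n ≤ k)
    (p : Fin (D n)) : Fin n → Carrier k D :=
  fun i => some ⟨⟨p.val, lt_of_lt_of_le p.isLt (hmono n k hn le_rfl)⟩,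
    ⟨i.val, lt_of_lt_of_le i.isLt
      (le_trans hn (k_le_s k D (lt_of_lt_of_le p.isLt (hmono n k hn le_rfl))))⟩⟩

def col (hmono : ∀ i j : ℕ, i ≤ j → j ≤ k → D i ≤ D j) (n : ℕ) (hn : n ≤ k)
    (i : Fin n) : Fin (D n) → Carrier k D :=
  fun p => gtuple k D hmono n hn p i

lemma gtuple_inj (hmono : ∀ i j : ℕ, i ≤ j → j ≤ k → D i ≤ D j) (n : ℕ) (hn : n ≤ k) (p : Fin (D n)) : Function.Injective (gtuple k D hmono n hn p) := by
  intro i i' h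
  have h2 := congrArg (fun z : Carrier k D =>
    match z with
    | some q => q.2.val
    | none => 0) h
  simp only [gtuple] at h2
  exact Fin.ext h2

lemma col_inj (hmono : ∀ i j : ℕ, i ≤ j → j ≤ k → D i ≤ D j) (n : ℕ) (hn : n ≤ k) (hD : 0 < D n) : Function.Injective (col k D hmono n hn) := by
  intro i i' h
  have h0 := congrFun h ⟨0, hD⟩
  exact gtuple_inj k D hmono n hn _ h0

open Classical in
noncomputable def megaF (hmono : ∀ i j : ℕ, i ≤ j → j ≤ k → D i ≤ D j) (n : ℕ) (hn : n ≤ k) (f : Fin n → Carrier k D) :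
    (Fin (D n) → Carrier k D) → Carrier k D :=
  fun x => if h : ∃ i : Fin n, x = col k D hmono n hn i then f h.choose else none

lemma megaF_col (hmono : ∀ i j : ℕ, i ≤ j → j ≤ k → D i ≤ D j) (n : ℕ) (hn : n ≤ k) (f : Fin n → Carrier k D) (hD : 0 < D n) (i : Fin n) :
    megaF k D hmono n hn f (col k D hmono n hn i) = f i := by
  classical
  unfold megaF
  rw [dif_pos ⟨i, rfl⟩]
  congr 1
  exact (col_inj k D hmono n hn hD
    (⟨i, rfl⟩ : ∃ i' : Fin n, col k D hmono n hn i = col k D hmono n hn i').choose_spec).symm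

lemma megaF_spec (hmono : ∀ i j : ℕ, i ≤ j → j ≤ k → D i ≤ D j) (n : ℕ) (hn : n ≤ k) (f : Fin n → Carrier k D) (hD : 0 < D n) {t : ℕ}
    {x : Fin (D n) → Carrier k D} (hx : megaF k D hmono n hn f x ∈ tribe k D t) :
    ∃ i, x = col k D hmono n hn i ∧ megaF k D hmono n hn f x = f i := by
  classical
  by_cases h : ∃ i : Fin n, x = col k D hmono n hn i
  · obtain ⟨i, rfl⟩ := h
    exact ⟨i, rfl, megaF_col k D hmono n hn f hD i⟩
  · exfalso
    apply mem_tribe_ne_none hx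
    unfold megaF
    rw [dif_neg h]

lemma good_megaF (hmono : ∀ i j : ℕ, i ≤ j → j ≤ k → D i ≤ D j) (n : ℕ) (hn : n ≤ k) (f : Fin n → Carrier k D) (hD : 0 < D n) :
    Good k D (D n) (megaF k D hmono n hn f) := by
  classical
  constructor
  · intro h; omega
  · intro t ht
    by_cases htn : t < D n
    · left
      refine ⟨⟨t, htn⟩,
        fun y => if h : ∃ i : Fin n, y = gtuple k D hmono n hn ⟨t, htn⟩ i
          then f h.choose else none, ?_⟩
      intro x hx
      obtain ⟨i, rfl, hfx⟩ := megaF_spec k D hmono n hn f hD hx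
      have hcolp : col k D hmono n hn i ⟨t, htn⟩ = gtuple k D hmono n hn ⟨t, htn⟩ i := rfl
      constructor
      · rw [hcolp]
        exact ⟨_, rfl, rfl⟩
      · rw [hfx, hcolp]
        show f i = if h : ∃ i', gtuple k D hmono n hn ⟨t, htn⟩ i
            = gtuple k D hmono n hn ⟨t, htn⟩ i' then f h.choose else none
        rw [dif_pos ⟨i, rfl⟩]
        congr 1
        exact gtuple_inj k D hmono n hn ⟨t, htn⟩
          (⟨i, rfl⟩ : ∃ i' : Fin n, gtuple k D hmono n hn ⟨t, htn⟩ i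
            = gtuple k D hmono n hn ⟨t, htn⟩ i').choose_spec
    · right
      refine ⟨Finset.image f Finset.univ, ?_, ?_⟩
      · have h1 : ¬ act k D t ht ≤ n := by
          rw [act_le_iff k D hmono ht hn]; exact htn
        have h2 : (Finset.image f Finset.univ).card ≤ n :=
          le_trans Finset.card_image_le (by simp)
        omega
      · intro x hx
        obtain ⟨i, rfl, hfx⟩ := megaF_spec k D hmono n hn f hD hx
        rw [hfx]
        exact Finset.mem_image_of_mem f (Finset.mem_univ i)

lemma ub_main (hmono : ∀ i j : ℕ, i ≤ j → j ≤ k → D i ≤ D j) (n : ℕ) (hn : n ≤ k)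
    (hD : 0 < D n) : (alg k D).genBy n (D n) := by
  classical
  refine ⟨Finset.image (gtuple k D hmono n hn) Finset.univ,
    le_trans Finset.card_image_le (by simp), ?_⟩
  intro f
  have hgen : ∀ p, ((alg k D).pow n).Gen
      (↑(Finset.image (gtuple k D hmono n hn) Finset.univ)) (gtuple k D hmono n hn p) :=
    fun p => Alg.Gen.base (by
      simp only [Finset.coe_image, Finset.coe_univ, Set.image_univ]
      exact ⟨p, rfl⟩)
  have happ := Alg.Gen.app (A := (alg k D).pow n)
    (G := ↑(Finset.image (gtuple k D hmono n hn) Finset.univ))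
    ⟨D n, megaF k D hmono n hn f, good_megaF k D hmono n hn f hD⟩
    (gtuple k D hmono n hn) hgen
  have heq : ((alg k D).pow n).interp
      ⟨D n, megaF k D hmono n hn f, good_megaF k D hmono n hn f hD⟩
      (gtuple k D hmono n hn) = f := by
    funext i
    show megaF k D hmono n hn f (fun p => gtuple k D hmono n hn p i) = f i
    exact megaF_col k D hmono n hn f hD i
  rw [heq] at happ
  exact happ

end UB

lemma none_not_tribe {k : ℕ} {D : ℕ → ℕ} {t : ℕ} : (none : Carrier k D) ∉ tribe k D t :=
  fun hx => mem_tribe_ne_none hx rfl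

lemma act_pos (k : ℕ) (D : ℕ → ℕ) (hmono : ∀ i j : ℕ, i ≤ j → j ≤ k → D i ≤ D j)
    (hD0 : D 0 = 0) {t : ℕ} (ht : t < D k) : 0 < act k D t ht := by
  have h := act_le_iff k D hmono ht (Nat.zero_le k)
  rw [hD0] at h
  omega

/-- `D 0 = 0`: the nullary constant `none` is a good operation. -/
lemma good_const_none (k : ℕ) (D : ℕ → ℕ) (hmono : ∀ i j : ℕ, i ≤ j → j ≤ k → D i ≤ D j)
    (hD0 : D 0 = 0) : Good k D 0 (fun _ => (none : Carrier k D)) := by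
  refine ⟨fun _ => hD0, fun t ht => Or.inr ⟨∅, ?_, fun x hx => absurd hx none_not_tribe⟩⟩
  simpa using act_pos k D hmono hD0 ht

/-- `D 1 = 0` (hence `D 0 = 0` and `1 ≤ k`): every nullary constant is good. -/
lemma good_const (k : ℕ) (D : ℕ → ℕ) (hmono : ∀ i j : ℕ, i ≤ j → j ≤ k → D i ≤ D j)
    (hk1 : 1 ≤ k) (hD1 : D 1 = 0) (c : Carrier k D) : Good k D 0 (fun _ => c) := by
  have hD0 : D 0 = 0 := by have := hmono 0 1 (by omega) hk1; omega
  refine ⟨fun _ => hD0, fun t ht => Or.inr ⟨{c}, ?_, fun x _ => Finset.mem_singleton_self c⟩⟩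
  have h := act_le_iff k D hmono ht hk1
  rw [hD1] at h
  have : ¬ act k D t ht ≤ 1 := by omega
  simp only [Finset.card_singleton]
  omega

lemma ub_zero_zero (k : ℕ) (D : ℕ → ℕ) (hmono : ∀ i j : ℕ, i ≤ j → j ≤ k → D i ≤ D j)
    (hD0 : D 0 = 0) : (alg k D).genBy 0 0 := by
  refine ⟨∅, le_rfl, fun a => ?_⟩
  have happ := Alg.Gen.app (A := (alg k D).pow 0) (G := ↑(∅ : Finset (Fin 0 → Carrier k D)))
    ⟨0, fun _ => none, good_const_none k D hmono hD0⟩ Fin.elim0 (fun i => i.elim0)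
  have : ((alg k D).pow 0).interp ⟨0, fun _ => none, good_const_none k D hmono hD0⟩
      Fin.elim0 = a := funext fun j => j.elim0
  rwa [this] at happ

lemma ub_zero_one (k : ℕ) (D : ℕ → ℕ) : (alg k D).genBy 0 1 := by
  classical
  refine ⟨{Fin.elim0}, by simp, fun a => ?_⟩
  have : a = Fin.elim0 := funext fun i => i.elim0
  exact Alg.Gen.base (by simp [this])

lemma ub_one_zero (k : ℕ) (D : ℕ → ℕ) (hmono : ∀ i j : ℕ, i ≤ j → j ≤ k → D i ≤ D j)
    (hk1 : 1 ≤ k) (hD1 : D 1 = 0) : (alg k D).genBy 1 0 := by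
  refine ⟨∅, le_rfl, fun a => ?_⟩
  have happ := Alg.Gen.app (A := (alg k D).pow 1) (G := ↑(∅ : Finset (Fin 1 → Carrier k D)))
    ⟨0, fun _ => a 0, good_const k D hmono hk1 hD1 (a 0)⟩ Fin.elim0 (fun i => i.elim0)
  have : ((alg k D).pow 1).interp ⟨0, fun _ => a 0, good_const k D hmono hk1 hD1 (a 0)⟩
      Fin.elim0 = a := by
    funext j
    show a 0 = a j
    congr 1
    omega
  rwa [this] at happ

/-- when `D 0 ≠ 0` nothing is generated by the empty set (there are no nullary ops). -/
lemma no_gen_empty (k : ℕ) (D : ℕ → ℕ) (hD0 : D 0 ≠ 0) {n : ℕ} {f : Fin n → Carrier k D}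
    (h : ((alg k D).pow n).Gen ∅ f) : False := by
  induction h with
  | base hb => exact hb
  | app F args hargs ih =>
    obtain ⟨m, F, hGood⟩ := F
    rcases Nat.eq_zero_or_pos m with rfl | hm
    · exact hD0 (hGood.1 rfl)
    · exact ih ⟨0, hm⟩

lemma lb_main (k : ℕ) (D : ℕ → ℕ) (hmono : ∀ i j : ℕ, i ≤ j → j ≤ k → D i ≤ D j)
    {n : ℕ} (hn1 : 1 ≤ n) (hnk : n ≤ k) :
    ∀ g : ℕ, (alg k D).genBy n g → D n ≤ g := by
  rintro g ⟨G, hcard, hgen⟩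
  rcases Nat.eq_zero_or_pos (D n) with h0 | hpos
  · omega
  have hDk : ∀ t : Fin (D n), t.val < D k :=
    fun t => lt_of_lt_of_le t.isLt (hmono n k hnk le_rfl)
  have key : ∀ t : Fin (D n), ∃ g' ∈ (↑G : Set (Fin n → Carrier k D)),
      ∀ i, g' i ∈ tribe k D t.val := by
    intro t
    set fstar : Fin n → Carrier k D := fun i =>
      some ⟨⟨t.val, hDk t⟩, ⟨i.val, lt_of_lt_of_le i.isLt (le_trans hnk (k_le_s k D (hDk t)))⟩⟩
      with hfstar
    have hact : act k D t.val (hDk t) ≤ n := (act_le_iff k D hmono (hDk t) hnk).mpr t.isLt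
    apply heredity k D _ (hDk t) hact (hgen fstar)
    constructor
    · intro i; exact ⟨_, rfl, rfl⟩
    · intro i i' hii
      have h2 := congrArg (fun z : Carrier k D =>
        match z with
        | some q => q.2.val
        | none => 0) hii
      simp only [hfstar] at h2
      exact Fin.ext h2
  choose φ hφG hφtribe using key
  have hinj : Function.Injective φ := by
    intro t t' h
    have h1 := hφtribe t ⟨0, hn1⟩
    have h2 := hφtribe t' ⟨0, hn1⟩
    rw [h] at h1
    obtain ⟨p, hp, hpt⟩ := h1
    obtain ⟨p', hp', hpt'⟩ := h2
    rw [hp] at hp'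
    have hpp : p = p' := Option.some.inj hp'
    apply Fin.ext
    rw [← hpt, ← hpt', hpp]
  have hle : D n ≤ G.card := by
    have := Finset.card_le_card_of_injOn (s := (Finset.univ : Finset (Fin (D n)))) φ
      (fun t _ => hφG t) (fun a _ b _ h => hinj h)
    simpa using this
  omega

end Stmt14

/-- for every `D : {0,…,k} → ω` that is increasing with
`D 0 ∈ {0,1}` and `D 2 > 0`, there is a finite algebra `A` of size
`1 + Σ_{j=0}^{k} j·D(j)` with `d_A(n) = D(n)` for all `n ≤ k`. -/
theorem stmt_14 (k : ℕ) (hk : 2 ≤ k) (D : ℕ → ℕ)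
    (hmono : ∀ i j : ℕ, i ≤ j → j ≤ k → D i ≤ D j)
    (h0 : D 0 = 0 ∨ D 0 = 1) (h2 : 0 < D 2) :
    ∃ (σ : Sig) (α : Type) (A : Alg σ α),
      Nat.card α = 1 + ∑ j ∈ Finset.range (k + 1), j * D j ∧
      ∀ n : ℕ, n ≤ k → A.d n = D n := by
  classical
  refine ⟨Stmt14.sig k D, Stmt14.Carrier k D, Stmt14.alg k D,
    Stmt14.card_carrier k D hmono, ?_⟩
  intro n hn
  have hub : (Stmt14.alg k D).genBy n (D n) := by
    rcases Nat.eq_zero_or_pos (D n) with hD | hD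
    · rcases Nat.eq_zero_or_pos n with rfl | hn1
      · rw [hD]; exact Stmt14.ub_zero_zero k D hmono hD
      · have hn1' : n = 1 := by
          by_contra hne
          have h2n : 2 ≤ n := by omega
          have := hmono 2 n h2n hn
          omega
        subst hn1'
        rw [hD]; exact Stmt14.ub_one_zero k D hmono (by omega) hD
    · rcases Nat.eq_zero_or_pos n with rfl | hn1
      · have hD01 : D 0 = 1 := by omega
        rw [hD01]; exact Stmt14.ub_zero_one k D
      · exact Stmt14.ub_main k D hmono n hn hD
  have hlb : ∀ g : ℕ, (Stmt14.alg k D).genBy n g → D n ≤ g := by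
    rcases Nat.eq_zero_or_pos n with rfl | hn1
    · rcases h0 with h00 | h01
      · intro g _; omega
      · rintro g ⟨G, hcard, hgen⟩
        rcases Nat.eq_zero_or_pos g with rfl | hg
        · exfalso
          have hGe : G = ∅ := Finset.card_eq_zero.mp (by omega)
          rw [hGe] at hgen
          have := hgen Fin.elim0
          rw [Finset.coe_empty] at this
          exact Stmt14.no_gen_empty k D (by omega) this
        · omega
    · exact Stmt14.lb_main k D hmono hn1 hn
  exact le_antisymm (Nat.sInf_le hub) (le_csInf ⟨_, hub⟩ hlb)
end

section
/- Fix k ≥ 2 and a finite set A = {a_1,…,a_q,1}. Define the partial k-ary operation F on A by F(x,…,x,1,x,…,x) = x (value 1 in any single position, all other arguments equal) and F(1,…,1) = 1, undefined otherwise. Then for the partial algebra A = ⟨A; F⟩, the set of tuples in A^n whose support has size at most k−1 is the unique minimal generating set of A^n, and hence d_A(n) = Σ_{i=0}^{k−1} q^i · C(n,i), a polynomial in n of degree k−1. -/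
/-- The signature with a single `k`-ary operation symbol. -/
def nuSig (k : ℕ) : Sig := ⟨Unit, fun _ => k⟩

/-- The partial algebra on `A = {a_1,…,a_q, 1}` (carrier `Option (Fin q)` with
`1 := none`) whose single partial `k`-ary operation `F` satisfies
`F(x,…,x,1,x,…,x) = x` (the value 1 in any single position, all other
arguments equal) and `F(1,…,1) = 1`, and is undefined otherwise. -/
noncomputable def nuAlg (k q : ℕ) : PartialAlg (nuSig k) (Option (Fin q)) where
  dom _ := {args | ∃ i : Fin k, args i = none ∧
    ∀ j j' : Fin k, j ≠ i → j' ≠ i → args j = args j'}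
  interp _ args :=
    letI := Classical.dec (∃ j : Fin k, args j ≠ none)
    if h : ∃ j : Fin k, args j ≠ none then args h.choose else none

/-!
A tuple `a` with fewer than `k` non-`1` coordinates is never a value `F(g₁, …, g_k)` of other
tuples: at each coordinate of its support exactly one argument is `1`, so these fewer than `k`
"holes" miss some argument position `i`, and then `gᵢ = a`. Conversely, if `a` has at least `k`
non-`1` coordinates, choose a map `hole` from coordinates to `Fin k` that is onto already on the
support of `a`; then `a = F(g₁, …, g_k)` where `gᵢ` is `a` with the coordinates in `hole⁻¹(i)` set
to `1`, and each `gᵢ` has strictly smaller support. Counting tuples by their support gives `d(n)`.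
-/

open Finset

namespace PartialAlg

variable {σ : Sig} {α : Type}

theorem d_eq_card (A : PartialAlg σ α) (n : ℕ) (S : Finset (Fin n → α))
    (hS : (A.pow n).Generates S) (hmin : ∀ G, (A.pow n).Generates G → ↑S ⊆ G) :
    A.d n = #S := by
  have hset : {g | ∃ G : Finset (Fin n → α), #G ≤ g ∧ (A.pow n).Generates ↑G}
      = Set.Ici #S := by
    ext g
    exact ⟨fun ⟨G, hG, hgen⟩ => (card_le_card (hmin G hgen)).trans hG,
      fun hg => ⟨S, hg, hS⟩⟩
  rw [d, hset, csInf_Ici]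

end PartialAlg

section Support

variable {ι β κ : Type*} [Fintype ι]

def supp (a : ι → Option β) : Finset ι := univ.filter fun j => a j ≠ none

@[simp]
theorem mem_supp {a : ι → Option β} {j : ι} : j ∈ supp a ↔ a j ≠ none := by
  simp [supp]

theorem card_filter_supp_eq [DecidableEq ι] [Fintype β] (s : Finset ι) :
    #{a : ι → Option β | supp a = s} = Fintype.card β ^ #s := by
  classical
  have hpi : ({a : ι → Option β | supp a = s} : Finset _)
      = Fintype.piFinset fun j => if j ∈ s then {none}ᶜ else {none} := by
    ext a
    simp only [mem_filter, mem_univ, true_and, Fintype.mem_piFinset, Finset.ext_iff, mem_supp]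
    refine forall_congr' fun j => ?_
    split_ifs with hj <;> simp [hj]
  simp [hpi, apply_ite card, card_compl]

theorem card_filter_card_supp_eq [DecidableEq ι] [Fintype β] (i : ℕ) :
    #{a : ι → Option β | #(supp a) = i} = (Fintype.card ι).choose i * Fintype.card β ^ i := by
  rw [card_eq_sum_card_fiberwise (f := supp) (t := powersetCard i univ)
    (fun a ha => mem_powersetCard.2 ⟨subset_univ _, (mem_filter.1 ha).2⟩)]
  have hfiber : ∀ s ∈ powersetCard i (univ : Finset ι),
      #{a ∈ ({a : ι → Option β | #(supp a) = i} : Finset _) | supp a = s}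
        = Fintype.card β ^ i := by
    intro s hs
    rw [← (mem_powersetCard.1 hs).2, ← card_filter_supp_eq, filter_filter]
    congr 1
    ext a
    simp only [mem_filter, mem_univ, true_and, and_iff_right_iff_imp]
    rintro rfl
    rfl
  rw [sum_congr rfl hfiber, sum_const, card_powersetCard, card_univ, smul_eq_mul]

theorem card_filter_card_supp_lt [DecidableEq ι] [Fintype β] (k : ℕ) :
    #{a : ι → Option β | #(supp a) < k}
      = ∑ i ∈ range k, Fintype.card β ^ i * (Fintype.card ι).choose i := by
  rw [card_eq_sum_card_fiberwise (f := fun a => #(supp a)) (t := range k)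
    (fun a ha => mem_range.2 (mem_filter.1 ha).2)]
  refine sum_congr rfl fun i hi => ?_
  rw [mul_comm, ← card_filter_card_supp_eq, filter_filter]
  congr 1
  ext a
  simp only [mem_filter, mem_univ, true_and, and_iff_right_iff_imp]
  rintro rfl
  exact mem_range.1 hi

def puncture [DecidableEq κ] (a : ι → Option β) (hole : ι → κ) : κ → ι → Option β :=
  fun i j => if hole j = i then none else a j

theorem supp_puncture_ssubset [DecidableEq κ] {a : ι → Option β} {hole : ι → κ} {i : κ}
    (hi : ∃ j ∈ supp a, hole j = i) : supp (puncture a hole i) ⊂ supp a := by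
  obtain ⟨j, hj, rfl⟩ := hi
  rw [ssubset_iff_of_subset fun x hx => ?_]
  · exact ⟨j, hj, by simp [puncture]⟩
  · simp only [mem_supp, puncture] at hx ⊢
    split_ifs at hx
    · exact absurd rfl hx
    · exact hx

end Support

theorem exists_surjOn_fin {ι : Type*} (s : Finset ι) {k : ℕ} (hk : 0 < k) (hks : k ≤ #s) :
    ∃ f : ι → Fin k, ∀ i, ∃ j ∈ s, f j = i := by
  have : Nonempty (Fin k) := ⟨⟨0, hk⟩⟩
  obtain ⟨e⟩ : Nonempty (Fin k ↪ s) :=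
    Function.Embedding.nonempty_of_card_le (by simpa using hks)
  have he : Function.Injective (Subtype.val ∘ e) := Subtype.val_injective.comp e.injective
  exact ⟨Function.invFun (Subtype.val ∘ e), fun i =>
    ⟨e i, (e i).2, Function.leftInverse_invFun he i⟩⟩

section NuAlg

variable {k q n : ℕ}

theorem nuAlg_exists_hole {args : Fin k → Option (Fin q)} (hd : args ∈ (nuAlg k q).dom ()) :
    ∃ h, args h = none ∧ ∀ i ≠ h, args i = (nuAlg k q).interp () args := by
  obtain ⟨h, hh, heq⟩ := hd
  refine ⟨h, hh, fun i hi => ?_⟩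
  dsimp only [nuAlg]
  split
  next hex => exact heq i _ hi fun hc => hex.choose_spec (hc ▸ hh)
  next hex => exact not_not.1 (not_exists.1 hex i)

theorem nuAlg_mem_dom_of_hole {args : Fin k → Option (Fin q)} {h : Fin k} {x : Option (Fin q)}
    (hh : args h = none) (hx : ∀ i ≠ h, args i = x) : args ∈ (nuAlg k q).dom () :=
  ⟨h, hh, fun i i' hi hi' => (hx i hi).trans (hx i' hi').symm⟩

theorem nuAlg_interp_of_hole (hk : 2 ≤ k) {args : Fin k → Option (Fin q)} {h : Fin k}
    {x : Option (Fin q)} (hh : args h = none) (hx : ∀ i ≠ h, args i = x) :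
    (nuAlg k q).interp () args = x := by
  obtain ⟨h', hh', hinterp⟩ := nuAlg_exists_hole (nuAlg_mem_dom_of_hole hh hx)
  by_cases hh'h : h' = h
  · have : Nontrivial (Fin k) := Fin.nontrivial_iff_two_le.2 hk
    obtain ⟨i, hi⟩ := exists_ne h
    rw [← hinterp i (hh'h ▸ hi), hx i hi]
  · rw [← hinterp h (Ne.symm hh'h), hh, ← hh', hx h' hh'h]

theorem nuAlg_pow_exists_arg_eq_interp {args : Fin k → Fin n → Option (Fin q)}
    (hd : args ∈ ((nuAlg k q).pow n).dom ())
    (hs : #(supp (((nuAlg k q).pow n).interp () args)) < k) :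
    ∃ i, args i = ((nuAlg k q).pow n).interp () args := by
  choose c hc_none hc using fun j => nuAlg_exists_hole (hd j)
  obtain ⟨i, -, hi⟩ := exists_mem_notMem_of_card_lt_card
    ((card_image_le (f := c)).trans_lt (hs.trans_eq (card_fin k).symm))
  refine ⟨i, funext fun j => ?_⟩
  by_cases hij : i = c j
  · have hj : j ∉ supp (((nuAlg k q).pow n).interp () args) :=
      fun hj => hi (hij ▸ mem_image_of_mem c hj)
    rw [mem_supp, not_not] at hj
    rw [hij, hc_none, hj]
  · exact hc j i hij

theorem nuAlg_pow_mem_of_gen {G : Set (Fin n → Option (Fin q))} {a : Fin n → Option (Fin q)}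
    (h : ((nuAlg k q).pow n).Gen G a) (ha : #(supp a) < k) : a ∈ G := by
  induction h with
  | base hb => exact hb
  | app _ args hd _ ih =>
    obtain ⟨i, hi⟩ := nuAlg_pow_exists_arg_eq_interp hd ha
    exact hi ▸ ih i (hi ▸ ha)

theorem puncture_mem_nuAlg_pow_dom (a : Fin n → Option (Fin q)) (hole : Fin n → Fin k) :
    puncture a hole ∈ ((nuAlg k q).pow n).dom () := fun j =>
  nuAlg_mem_dom_of_hole (h := hole j) (x := a j) (if_pos rfl) fun _ hi => if_neg (Ne.symm hi)

theorem nuAlg_pow_interp_puncture (hk : 2 ≤ k) (a : Fin n → Option (Fin q))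
    (hole : Fin n → Fin k) :
    ((nuAlg k q).pow n).interp () (puncture a hole) = a := funext fun j =>
  nuAlg_interp_of_hole hk (h := hole j) (if_pos rfl) fun _ hi => if_neg (Ne.symm hi)

theorem nuAlg_pow_generates (hk : 2 ≤ k) :
    ((nuAlg k q).pow n).Generates {a | #(supp a) < k} := by
  intro a
  induction hm : #(supp a) using Nat.strong_induction_on generalizing a with
  | _ m ih =>
  by_cases ha : #(supp a) < k
  · exact .base ha
  obtain ⟨hole, hsurj⟩ := exists_surjOn_fin (supp a) (by omega : 0 < k) (by omega)
  rw [← nuAlg_pow_interp_puncture hk a hole]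
  exact .app () _ (puncture_mem_nuAlg_pow_dom a hole) fun i =>
    ih _ (hm ▸ card_lt_card (supp_puncture_ssubset (hsurj i))) _ rfl

end NuAlg

/-- for `k ≥ 2`, in the partial algebra `⟨A; F⟩` above, the set
of tuples of `A^n` whose support (set of coordinates ≠ 1) has size at most
`k−1` is the unique minimal generating set of `A^n`; hence
`d_A(n) = Σ_{i=0}^{k−1} qⁱ·C(n,i)`, a polynomial in `n` of degree `k−1`. -/
theorem stmt_17 (k q n : ℕ) (hk : 2 ≤ k) :
    (((nuAlg k q).pow n).Generates
      {a : Fin n → Option (Fin q) |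
        (Finset.univ.filter fun j : Fin n => a j ≠ none).card ≤ k - 1}) ∧
    (∀ G : Set (Fin n → Option (Fin q)), ((nuAlg k q).pow n).Generates G →
      {a : Fin n → Option (Fin q) |
        (Finset.univ.filter fun j : Fin n => a j ≠ none).card ≤ k - 1} ⊆ G) ∧
    (nuAlg k q).d n = ∑ i ∈ Finset.range k, q ^ i * n.choose i := by
  have hS : {a : Fin n → Option (Fin q) |
      (Finset.univ.filter fun j : Fin n => a j ≠ none).card ≤ k - 1} = {a | #(supp a) < k} :=
    Set.ext fun _ => Nat.le_sub_one_iff_lt (by omega)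
  have hgen := nuAlg_pow_generates (q := q) (n := n) hk
  have hess : ∀ G, ((nuAlg k q).pow n).Generates G → {a | #(supp a) < k} ⊆ G :=
    fun G hG a ha => nuAlg_pow_mem_of_gen (hG a) ha
  refine hS ▸ ⟨hgen, hess, ?_⟩
  rw [(nuAlg k q).d_eq_card n {a | #(supp a) < k} (by simpa using hgen) (by simpa using hess),
    card_filter_card_supp_lt, Fintype.card_fin, Fintype.card_fin]
end
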